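/- Let κ > 0, λ real, p ≠ 0, n ≥ 1, and let ω̄, ω_n(h), ω_{n+1}(h) be as in the Fourier analysis (ω_m(h) = -∑_{j=0}^{m} ((2^{j+2}κ/(3^j h²)) sin^{2j+2}(ph/2) + i(2^j λ/(3^j h)) sin(ph) sin^{2j}(ph/2)), ω̄ = -κp² - iλp). Then lim_{h→0⁺} (|ω_{n+1}(h) - ω̄|² - |ω_n(h) - ω̄|²)/h^{2n+4} = κ² p^{2n+8}/6^{n+2}. In particular, |ω_{n+1} - ω̄|² - |ω_n - ω̄|² ∼ (κ² p^{2n+8}/6^{n+2}) h^{2n+4} as h → 0. -/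

import Mathlib

/-!
With `s = sin (p h / 2)`, the `j`-th term of `omegaCorr` is a geometric progression
`g h * (r h * h ^ 2) ^ j` of ratio `r = (2/3) (s/h)² → p²/6`, where `g = κ (2s/h)²` for the real
part and `g = λ sin (p h) / h` for the imaginary part. If `(g - g₀)/h² → g₁`, the error
`E_m = S_m - g₀` of the partial sums satisfies `E_m / h² → g₁ + g₀ r₀` for every `m ≥ 1`, and
`E_{n+1}² - E_n² = t_{n+1} (E_{n+1} + E_n)` with `t_{n+1} ~ g₀ r₀^{n+1} h^{2n+2}`. The cubic Taylor
bound for the sine gives `g₁ + g₀ r₀ = κ p⁴/12` for the real part and `0` for the imaginary part.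
-/

open Finset in
/-- Fourier symbol of the `m`-th corrected mass-lumped Galerkin scheme, at mesh size `h`. -/
noncomputable def omegaCorr (kappa lam p h : ℝ) (m : ℕ) : ℂ :=
  -(∑ j ∈ range (m+1),
    ((((2:ℝ)^(j+2) * kappa / (3^j * h^2) * Real.sin (p*h/2) ^ (2*j+2) : ℝ) : ℂ) +
      Complex.I * (((2:ℝ)^j * lam / (3^j * h) * Real.sin (p*h)
        * Real.sin (p*h/2) ^ (2*j) : ℝ) : ℂ)))

open Finset Filter Topology Real

lemma tendsto_of_tendsto_sub_div_sq {g : ℝ → ℝ} {g₀ g₁ : ℝ}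
    (hg : Tendsto (fun h => (g h - g₀) / h ^ 2) (𝓝[≠] 0) (𝓝 g₁)) :
    Tendsto g (𝓝[≠] 0) (𝓝 g₀) := by
  have hsq : Tendsto (fun h : ℝ => h ^ 2) (𝓝[≠] 0) (𝓝 0) :=
    tendsto_nhdsWithin_of_tendsto_nhds (by simpa using (continuous_pow 2).tendsto (0 : ℝ))
  have hlim := (hsq.mul hg).const_add g₀
  rw [zero_mul, add_zero] at hlim
  refine hlim.congr' ?_
  filter_upwards [self_mem_nhdsWithin] with h (hh : h ≠ 0)
  field_simp
  ring

lemma tendsto_sin_mul_div_sub_div_sq (c : ℝ) :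
    Tendsto (fun h => (sin (c * h) / h - c) / h ^ 2) (𝓝[≠] 0) (𝓝 (-(c ^ 3 / 6))) := by
  have hsmall : ∀ᶠ h : ℝ in 𝓝 0, |c * h| ≤ 1 := by
    have : Tendsto (fun h : ℝ => |c * h|) (𝓝 0) (𝓝 0) := by
      simpa using ((continuous_const_mul c).abs).tendsto 0
    exact this.eventually (ge_mem_nhds one_pos)
  have hbound : ∀ᶠ h : ℝ in 𝓝[≠] 0,
      ‖(sin (c * h) / h - c) / h ^ 2 - -(c ^ 3 / 6)‖ ≤ |c| ^ 5 / 100 * h ^ 2 := by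
    filter_upwards [nhdsWithin_le_nhds hsmall, self_mem_nhdsWithin] with h hch (hh : h ≠ 0)
    have hid : (sin (c * h) / h - c) / h ^ 2 - -(c ^ 3 / 6)
        = (sin (c * h) - (c * h - (c * h) ^ 3 / 6)) / h ^ 3 := by
      field_simp
      ring
    rw [Real.norm_eq_abs, hid, abs_div, div_le_iff₀ (by positivity)]
    calc |sin (c * h) - (c * h - (c * h) ^ 3 / 6)| ≤ |c * h| ^ 5 / 100 := sin_bound hch
      _ = |c| ^ 5 / 100 * h ^ 2 * |h ^ 3| := by
        rw [abs_mul, abs_pow, mul_pow, ← sq_abs h]; ring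
  have hzero : Tendsto (fun h : ℝ => |c| ^ 5 / 100 * h ^ 2) (𝓝[≠] 0) (𝓝 0) :=
    tendsto_nhdsWithin_of_tendsto_nhds
      (by simpa using ((continuous_pow 2).const_mul (|c| ^ 5 / 100)).tendsto (0 : ℝ))
  exact tendsto_sub_nhds_zero_iff.mp (squeeze_zero_norm' hbound hzero)

def geomPartialSum (g r : ℝ → ℝ) (m : ℕ) (h : ℝ) : ℝ :=
  ∑ j ∈ range (m + 1), g h * (r h * h ^ 2) ^ j

section GeomPartialSum

variable {g r : ℝ → ℝ} {g₀ g₁ r₀ : ℝ}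

lemma geomPartialSum_succ (m : ℕ) (h : ℝ) :
    geomPartialSum g r (m + 1) h = geomPartialSum g r m h + g h * (r h * h ^ 2) ^ (m + 1) :=
  sum_range_succ _ _

lemma geomPartialSum_succ' (m : ℕ) (h : ℝ) :
    geomPartialSum g r (m + 1) h
      = g h + g h * r h * h ^ 2 * ∑ j ∈ range (m + 1), (r h * h ^ 2) ^ j := by
  rw [geomPartialSum, sum_range_succ', mul_sum, pow_zero, mul_one, add_comm]
  exact congrArg _ (sum_congr rfl fun j _ => by ring)

lemma tendsto_geomPartialSum_succ_sub_div_sq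
    (hg : Tendsto (fun h => (g h - g₀) / h ^ 2) (𝓝[≠] 0) (𝓝 g₁))
    (hr : Tendsto r (𝓝[≠] 0) (𝓝 r₀)) (m : ℕ) :
    Tendsto (fun h => (geomPartialSum g r (m + 1) h - g₀) / h ^ 2) (𝓝[≠] 0)
      (𝓝 (g₁ + g₀ * r₀)) := by
  have hx : Tendsto (fun h => r h * h ^ 2) (𝓝[≠] 0) (𝓝 0) := by
    simpa using hr.mul (tendsto_nhdsWithin_of_tendsto_nhds ((continuous_pow 2).tendsto (0 : ℝ)))
  have hgeom : Tendsto (fun h => ∑ j ∈ range (m + 1), (r h * h ^ 2) ^ j) (𝓝[≠] 0) (𝓝 1) := by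
    have := ((continuous_finsetSum (range (m + 1)) fun j _ => continuous_pow j).tendsto 0).comp hx
    simpa [Function.comp_def, sum_range_succ'] using this
  have hlim := hg.add (((tendsto_of_tendsto_sub_div_sq hg).mul hr).mul hgeom)
  rw [mul_one] at hlim
  refine hlim.congr' ?_
  filter_upwards [self_mem_nhdsWithin] with h (hh : h ≠ 0)
  rw [geomPartialSum_succ']
  field_simp
  ring

lemma tendsto_sq_geomPartialSum_succ_sub_sq
    (hg : Tendsto (fun h => (g h - g₀) / h ^ 2) (𝓝[≠] 0) (𝓝 g₁))
    (hr : Tendsto r (𝓝[≠] 0) (𝓝 r₀)) (m : ℕ) :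
    Tendsto (fun h => ((geomPartialSum g r (m + 2) h - g₀) ^ 2
        - (geomPartialSum g r (m + 1) h - g₀) ^ 2) / h ^ (2 * m + 6)) (𝓝[≠] 0)
      (𝓝 (g₀ * r₀ ^ (m + 2) * (2 * (g₁ + g₀ * r₀)))) := by
  have hlead := (tendsto_of_tendsto_sub_div_sq hg).mul (hr.pow (m + 2))
  have hsum := (tendsto_geomPartialSum_succ_sub_div_sq hg hr (m + 1)).add
    (tendsto_geomPartialSum_succ_sub_div_sq hg hr m)
  rw [← two_mul] at hsum
  refine (hlead.mul hsum).congr' ?_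
  filter_upwards [self_mem_nhdsWithin] with h (hh : h ≠ 0)
  rw [geomPartialSum_succ (m + 1)]
  field_simp
  ring

end GeomPartialSum

noncomputable def diffusionFactor (kappa p h : ℝ) : ℝ := kappa * (2 * sin (p * h / 2) / h) ^ 2

noncomputable def convectionFactor (lam p h : ℝ) : ℝ := lam * sin (p * h) / h

noncomputable def correctionRatio (p h : ℝ) : ℝ := 2 / 3 * (sin (p * h / 2) / h) ^ 2

lemma omegaCorr_eq (kappa lam p h : ℝ) (m : ℕ) :
    omegaCorr kappa lam p h m
      = -((geomPartialSum (diffusionFactor kappa p) (correctionRatio p) m h : ℂ)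
          + Complex.I * geomPartialSum (convectionFactor lam p) (correctionRatio p) m h) := by
  have hdiff : ∀ j : ℕ, (2 : ℝ) ^ (j + 2) * kappa / (3 ^ j * h ^ 2) * sin (p * h / 2) ^ (2 * j + 2)
      = diffusionFactor kappa p h * (correctionRatio p h * h ^ 2) ^ j := by
    intro j
    rcases eq_or_ne h 0 with rfl | hh
    · simp [diffusionFactor]
    · simp only [diffusionFactor, correctionRatio, mul_pow, div_pow]
      field_simp
      ring
  have hconv : ∀ j : ℕ, (2 : ℝ) ^ j * lam / (3 ^ j * h) * sin (p * h) * sin (p * h / 2) ^ (2 * j)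
      = convectionFactor lam p h * (correctionRatio p h * h ^ 2) ^ j := by
    intro j
    rcases eq_or_ne h 0 with rfl | hh
    · simp [convectionFactor]
    · simp only [convectionFactor, correctionRatio, mul_pow, div_pow]
      field_simp
      ring
  simp only [omegaCorr, hdiff, hconv, geomPartialSum, Complex.ofReal_sum, mul_sum, sum_add_distrib]

lemma norm_omegaCorr_sub_sq (kappa lam p h : ℝ) (m : ℕ) :
    ‖omegaCorr kappa lam p h m
        - (-((kappa * p^2 : ℝ) : ℂ) - Complex.I * ((lam * p : ℝ) : ℂ))‖ ^ 2
      = (geomPartialSum (diffusionFactor kappa p) (correctionRatio p) m h - kappa * p ^ 2) ^ 2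
        + (geomPartialSum (convectionFactor lam p) (correctionRatio p) m h - lam * p) ^ 2 := by
  rw [omegaCorr_eq, ← Complex.normSq_add_mul_I, ← Complex.sq_norm, ← norm_neg]
  congr 2
  push_cast
  ring

lemma tendsto_sin_half_div_sub_div_sq (p : ℝ) :
    Tendsto (fun h => (sin (p * h / 2) / h - p / 2) / h ^ 2) (𝓝[≠] 0) (𝓝 (-(p ^ 3 / 48))) := by
  simp_rw [mul_div_right_comm p]
  convert tendsto_sin_mul_div_sub_div_sq (p / 2) using 2
  ring

lemma tendsto_diffusionFactor_sub_div_sq (kappa p : ℝ) :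
    Tendsto (fun h => (diffusionFactor kappa p h - kappa * p ^ 2) / h ^ 2) (𝓝[≠] 0)
      (𝓝 (-(kappa * p ^ 4 / 12))) := by
  have hv := tendsto_sin_half_div_sub_div_sq p
  have hu := tendsto_of_tendsto_sub_div_sq hv
  have hlim := (hv.const_mul (2 * kappa)).mul ((hu.const_mul 2).add_const p)
  convert hlim using 1
  · ext h
    simp only [diffusionFactor]
    ring
  · congr 1
    ring

lemma tendsto_convectionFactor_sub_div_sq (lam p : ℝ) :
    Tendsto (fun h => (convectionFactor lam p h - lam * p) / h ^ 2) (𝓝[≠] 0)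
      (𝓝 (-(lam * p ^ 3 / 6))) := by
  convert (tendsto_sin_mul_div_sub_div_sq p).const_mul lam using 1
  · ext h
    simp only [convectionFactor]
    ring
  · congr 1
    ring

lemma tendsto_correctionRatio (p : ℝ) :
    Tendsto (correctionRatio p) (𝓝[≠] 0) (𝓝 (p ^ 2 / 6)) := by
  rw [show p ^ 2 / 6 = 2 / 3 * (p / 2) ^ 2 by ring]
  exact ((tendsto_of_tendsto_sub_div_sq (tendsto_sin_half_div_sub_div_sq p)).pow 2).const_mul _

theorem stmt_15_general (kappa lam p : ℝ) (n : ℕ)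
    (hn : 1 ≤ n) :
    Filter.Tendsto
      (fun h : ℝ =>
        (‖omegaCorr kappa lam p h (n+1)
            - (-((kappa * p^2 : ℝ) : ℂ) - Complex.I * ((lam * p : ℝ) : ℂ))‖ ^ 2
          - ‖omegaCorr kappa lam p h n
            - (-((kappa * p^2 : ℝ) : ℂ) - Complex.I * ((lam * p : ℝ) : ℂ))‖ ^ 2)
          / h ^ (2*n+4))
      (nhdsWithin 0 (Set.Ioi 0))
      (nhds (kappa^2 * p^(2*n+8) / 6^(n+2))) := by
  obtain ⟨k, rfl⟩ := Nat.exists_eq_add_of_le' hn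
  have hdiff := tendsto_sq_geomPartialSum_succ_sub_sq
    (tendsto_diffusionFactor_sub_div_sq kappa p) (tendsto_correctionRatio p) k
  have hconv := tendsto_sq_geomPartialSum_succ_sub_sq
    (tendsto_convectionFactor_sub_div_sq lam p) (tendsto_correctionRatio p) k
  refine Tendsto.mono_left ?_ (nhdsWithin_mono (t := {0}ᶜ) 0 fun h (hh : 0 < h) => hh.ne')
  convert hdiff.add hconv using 1
  · ext h
    simp only [norm_omegaCorr_sub_sq]
    ring
  · congr 1
    rw [div_pow]
    field_simp
    ring

theorem stmt_15 (kappa lam p : ℝ) (n : ℕ) (hkappa : 0 < kappa) (hp : p ≠ 0)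
    (hn : 1 ≤ n) :
    Filter.Tendsto
      (fun h : ℝ =>
        (‖omegaCorr kappa lam p h (n+1)
            - (-((kappa * p^2 : ℝ) : ℂ) - Complex.I * ((lam * p : ℝ) : ℂ))‖ ^ 2
          - ‖omegaCorr kappa lam p h n
            - (-((kappa * p^2 : ℝ) : ℂ) - Complex.I * ((lam * p : ℝ) : ℂ))‖ ^ 2)
          / h ^ (2*n+4))
      (nhdsWithin 0 (Set.Ioi 0))
      (nhds (kappa^2 * p^(2*n+8) / 6^(n+2))) :=
  stmt_15_general kappa lam p n hn
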